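/- Variational representation of f-divergences: for all Borel probability measures P, Q on ℝ^d, the f-divergence D_f(P‖Q) := ∫ f(dP/dQ) dQ if P ≪ Q (and +∞ otherwise) satisfies, as an identity in [0,∞], D_f(P‖Q) = sup_{φ ∈ C_b(ℝ^d)} { ∫ φ dP − inf_{ν ∈ ℝ} ( ν + ∫ f*(φ − ν) dQ ) }, where C_b(ℝ^d) is the set of bounded continuous real-valued functions on ℝ^d. -/

import Mathlib

open MeasureTheory Filter Set Topology
open scoped Classical

noncomputable section

/-- `ℝ^d` with the Euclidean norm. -/
abbrev Euc (d : ℕ) := EuclideanSpace ℝ (Fin d)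

/-- Legendre transform `f*(y) = sup_{t ≥ 0} (t·y − f(t))` of `f : [0,∞) → ℝ`. -/
def legendre (f : ℝ → ℝ) (y : ℝ) : ℝ :=
  sSup ((fun t => t * y - f t) '' Ici (0 : ℝ))

/-- `Γ_L`: the set of `L`-Lipschitz real-valued functions on `E`. -/
def GammaL (E : Type*) [NormedAddCommGroup E] (L : ℝ) : Set (E → ℝ) :=
  {φ | ∀ x y : E, |φ x - φ y| ≤ L * ‖x - y‖}

/-- The objective `∫ φ dP − inf_ν ( ν + ∫ f*(φ − ν) dQ )`. -/
def dualObj (f : ℝ → ℝ) {E : Type*} [NormedAddCommGroup E] [MeasurableSpace E]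
    (φ : E → ℝ) (P Q : Measure E) : ℝ :=
  (∫ x, φ x ∂P) - sInf (Set.range fun ν : ℝ => ν + ∫ x, legendre f (φ x - ν) ∂Q)

/-- The Lipschitz-regularized `f`-divergence `D_f^{Γ_L}(P‖Q)`. -/
def Dreg (f : ℝ → ℝ) {E : Type*} [NormedAddCommGroup E] [MeasurableSpace E]
    (L : ℝ) (P Q : Measure E) : ℝ :=
  sSup ((fun φ => dualObj f φ P Q) '' GammaL E L)

/-- The 1-Wasserstein metric `W^{Γ_1}(P,Q)` in dual form. -/
def W1 {E : Type*} [NormedAddCommGroup E] [MeasurableSpace E] (P Q : Measure E) : ℝ :=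
  sSup ((fun φ => (∫ x, φ x ∂P) - ∫ x, φ x ∂Q) '' GammaL E 1)

/-- Membership in `P_1`: Borel probability measure with finite first moment. -/
def memP1 {E : Type*} [NormedAddCommGroup E] [MeasurableSpace E] (P : Measure E) : Prop :=
  IsProbabilityMeasure P ∧ Integrable (fun x => ‖x‖) P

/-- Support of a measure: points all of whose open neighborhoods have positive measure. -/
def msupport {E : Type*} [TopologicalSpace E] [MeasurableSpace E] (μ : Measure E) : Set E :=
  {x | ∀ U : Set E, IsOpen U → x ∈ U → 0 < μ U}

/-- The `f`-divergence `D_f(P‖Q) ∈ [0,∞]`, i.e. `∫ f(dP/dQ) dQ` if `P ≪ Q`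
(and the integral is well defined), `+∞` otherwise. -/
def DfE (f : ℝ → ℝ) {E : Type*} [MeasurableSpace E] (P Q : Measure E) : EReal :=
  if P ≪ Q ∧ Integrable (fun x => f ((P.rnDeriv Q x).toReal)) Q
  then ((∫ x, f ((P.rnDeriv Q x).toReal) ∂Q : ℝ) : EReal)
  else ⊤



open scoped ENNReal

section ConvexAux
variable {f : ℝ → ℝ}

/-- Subgradient of a convex function at an interior point `s > 0`. -/
lemma exists_subgradient (hconv : ConvexOn ℝ (Ici 0) f) {s : ℝ} (hs : 0 < s) :
    ∃ m : ℝ, ∀ t ∈ Ici (0:ℝ), f s + m * (t - s) ≤ f t := by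
  set h : ℝ → ℝ := fun t => (f t - f s) / (t - s) with hh
  have hmem : ∀ t : ℝ, 0 ≤ t → t ∈ Ici (0:ℝ) := fun t ht => ht
  have hbdd : BddAbove (h '' Ico 0 s) := by
    refine ⟨h (s + 1), ?_⟩
    rintro _ ⟨t, ht, rfl⟩
    exact hconv.secant_mono (le_of_lt hs) (hmem t ht.1)
      (by positivity : (0:ℝ) ≤ s + 1) (ne_of_lt ht.2) (by intro hc; linarith) (by linarith [ht.2])
  have hne : (h '' Ico 0 s).Nonempty := ⟨h 0, ⟨0, ⟨le_refl _, hs⟩, rfl⟩⟩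
  refine ⟨sSup (h '' Ico 0 s), fun t ht => ?_⟩
  rcases lt_trichotomy t s with hts | rfl | hst
  · -- t < s : h t ≤ m, and t - s < 0
    have h1 : h t ≤ sSup (h '' Ico 0 s) := le_csSup hbdd ⟨t, ⟨ht, hts⟩, rfl⟩
    have h2 : (f t - f s) ≥ sSup (h '' Ico 0 s) * (t - s) := by
      rw [hh] at h1
      have := mul_le_mul_of_nonpos_right h1 (by linarith : t - s ≤ 0)
      rwa [div_mul_cancel₀ _ (by linarith : t - s ≠ 0)] at this
    linarith
  · simp
  · -- s < t : m ≤ h t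
    have h1 : sSup (h '' Ico 0 s) ≤ h t := by
      apply csSup_le hne
      rintro _ ⟨u, hu, rfl⟩
      exact hconv.secant_mono (le_of_lt hs) (hmem u hu.1) ht
        (ne_of_lt hu.2) (ne_of_gt hst) (by linarith [hu.2])
    have h2 : (f t - f s) ≥ sSup (h '' Ico 0 s) * (t - s) := by
      have := mul_le_mul_of_nonneg_right h1 (by linarith : (0:ℝ) ≤ t - s)
      rwa [div_mul_cancel₀ _ (by linarith : t - s ≠ 0)] at this
    linarith

lemma superlinear_bound (hsl : Tendsto (fun s => f s / s) atTop atTop) (y : ℝ) :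
    ∃ T : ℝ, 1 ≤ T ∧ ∀ t, T ≤ t → (y + 1) * t ≤ f t := by
  have := hsl.eventually_ge_atTop (y + 1)
  rcases (eventually_atTop.1 this) with ⟨T₀, hT₀⟩
  refine ⟨max T₀ 1, le_max_right _ _, fun t ht => ?_⟩
  have ht1 : (1:ℝ) ≤ t := le_trans (le_max_right _ _) ht
  have h0 : (0:ℝ) < t := by linarith
  have := hT₀ t (le_trans (le_max_left _ _) ht)
  calc (y+1) * t ≤ (f t / t) * t := by
        apply mul_le_mul_of_nonneg_right this h0.le
    _ = f t := by field_simp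

lemma legendre_bddAbove (hconv : ConvexOn ℝ (Ici 0) f)
    (hsl : Tendsto (fun s => f s / s) atTop atTop) (y : ℝ) :
    BddAbove ((fun t => t * y - f t) '' Ici (0:ℝ)) := by
  obtain ⟨m, hm⟩ := exists_subgradient hconv one_pos
  obtain ⟨T, hT1, hT⟩ := superlinear_bound hsl y
  refine ⟨max (|y| * T + |f 1| + |m| * (T + 1)) 0, ?_⟩
  rintro _ ⟨t, (ht : (0:ℝ) ≤ t), rfl⟩
  show t * y - f t ≤ _
  rcases le_or_gt t T with h | h
  · refine le_trans ?_ (le_max_left _ _)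
    have h1 : f 1 + m * (t - 1) ≤ f t := hm t ht
    have h2 : t * y ≤ |y| * T := by
      calc t * y ≤ |t * y| := le_abs_self _
        _ = t * |y| := by rw [abs_mul, abs_of_nonneg ht]
        _ ≤ T * |y| := by apply mul_le_mul_of_nonneg_right h (abs_nonneg _)
        _ = |y| * T := mul_comm _ _
    have h3 : -(m * (t - 1)) ≤ |m| * (T + 1) := by
      calc -(m * (t-1)) ≤ |m * (t-1)| := neg_le_abs _
        _ = |m| * |t - 1| := abs_mul _ _
        _ ≤ |m| * (T + 1) := by
            apply mul_le_mul_of_nonneg_left _ (abs_nonneg _)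
            rw [abs_le]; constructor <;> linarith
    have h4 : -f 1 ≤ |f 1| := neg_le_abs _
    linarith
  · refine le_trans ?_ (le_max_right _ _)
    have := hT t h.le
    nlinarith [le_abs_self y, abs_nonneg y, lt_of_lt_of_le (lt_of_lt_of_le one_pos hT1) h.le]

lemma legendre_set_nonempty (f : ℝ → ℝ) (y : ℝ) :
    ((fun t => t * y - f t) '' Ici (0:ℝ)).Nonempty :=
  ⟨0 * y - f 0, ⟨0, Set.mem_Ici.2 le_rfl, rfl⟩⟩

lemma fenchelYoung (hconv : ConvexOn ℝ (Ici 0) f)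
    (hsl : Tendsto (fun s => f s / s) atTop atTop) {t : ℝ} (ht : 0 ≤ t) (y : ℝ) :
    t * y - f t ≤ legendre f y :=
  le_csSup (legendre_bddAbove hconv hsl y) ⟨t, ht, rfl⟩

lemma legendre_le {y c : ℝ} (h : ∀ t, 0 ≤ t → t * y - f t ≤ c) : legendre f y ≤ c :=
  csSup_le (legendre_set_nonempty f y) (by rintro _ ⟨t, ht, rfl⟩; exact h t ht)

lemma legendre_mono (hconv : ConvexOn ℝ (Ici 0) f)
    (hsl : Tendsto (fun s => f s / s) atTop atTop) {y z : ℝ} (hyz : y ≤ z) :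
    legendre f y ≤ legendre f z := by
  apply legendre_le
  intro t ht
  calc t * y - f t ≤ t * z - f t := by nlinarith
    _ ≤ legendre f z := fenchelYoung hconv hsl ht z

lemma legendre_convex (hconv : ConvexOn ℝ (Ici 0) f)
    (hsl : Tendsto (fun s => f s / s) atTop atTop) :
    ConvexOn ℝ univ (legendre f) := by
  refine ⟨convex_univ, fun y _ z _ a b ha hb hab => ?_⟩
  apply legendre_le
  intro t ht
  have h1 := fenchelYoung hconv hsl ht y
  have h2 := fenchelYoung hconv hsl ht z
  have := add_le_add (mul_le_mul_of_nonneg_left h1 ha) (mul_le_mul_of_nonneg_left h2 hb)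
  calc t * (a • y + b • z) - f t = a * (t * y - f t) + b * (t * z - f t) := by
        simp only [smul_eq_mul]; linear_combination (f t) * hab
    _ ≤ a * legendre f y + b * legendre f z := this
    _ = a • legendre f y + b • legendre f z := by simp

section LipAux
variable {F : ℝ → ℝ}
/-- A finite convex function on `ℝ` is Lipschitz on each compact interval. -/
lemma convexOn_lipschitz (hc : ConvexOn ℝ univ F) (a b : ℝ) :
    ∃ K : ℝ, 0 ≤ K ∧ ∀ y ∈ Icc a b, ∀ z ∈ Icc a b, |F y - F z| ≤ K * |y - z| := by
  rcases le_or_gt a b with hab | hab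
  · have slsym : ∀ p q : ℝ, (F p - F q)/(p - q) = (F q - F p)/(q - p) := by
      intro p q; rw [← neg_div_neg_eq]; ring_nf
    set M₁ := (F b - F (b+1)) / (b - (b+1)) with hM₁
    set M₂ := (F a - F (a-1)) / (a - (a-1)) with hM₂
    set K := max |M₁| |M₂| with hK
    refine ⟨K, le_trans (abs_nonneg _) (le_max_left _ _), ?_⟩
    have key : ∀ y ∈ Icc a b, ∀ z ∈ Icc a b, y < z → |F z - F y| ≤ K * (z - y) := by
      intro y hy z hz hyz
      have triv : ∀ x : ℝ, x ∈ (univ : Set ℝ) := fun x => trivial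
      set S := (F z - F y) / (z - y) with hS
      have hu1 : S ≤ (F (b+1) - F y) / (b + 1 - y) :=
        hc.secant_mono (triv y) (triv z) (triv (b+1))
          (ne_of_gt hyz) (by intro hcon; linarith [hy.2]) (by linarith [hz.2])
      have hu2 : (F y - F (b+1)) / (y - (b+1)) ≤ M₁ :=
        hc.secant_mono (triv (b+1)) (triv y) (triv b)
          (by intro hcon; linarith [hy.2]) (by intro hcon; linarith) (hy.2)
      have hu : S ≤ M₁ := by
        rw [slsym y (b+1)] at hu2; linarith
      have hl1 : (F (a-1) - F y) / (a - 1 - y) ≤ S :=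
        hc.secant_mono (triv y) (triv (a-1)) (triv z)
          (by intro hcon; linarith [hy.1]) (ne_of_gt hyz) (by linarith [hy.1, hz.1])
      have hl2 : M₂ ≤ (F y - F (a-1)) / (y - (a-1)) := by
        rcases eq_or_lt_of_le hy.1 with rfl | hay
        · exact le_rfl
        · exact hc.secant_mono (triv (a-1)) (triv a) (triv y)
            (by intro hcon; linarith) (by intro hcon; linarith) (le_of_lt hay)
      have hl : M₂ ≤ S := by
        rw [slsym y (a-1)] at hl2; linarith
      have hslope : |S| ≤ K := by
        rw [abs_le]
        constructor
        · have : -K ≤ M₂ := by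
            rw [neg_le]
            exact le_trans (neg_le_abs _) (le_max_right _ _)
          linarith
        · exact le_trans hu (le_trans (le_abs_self _) (le_max_left _ _))
      have hzy : (0:ℝ) < z - y := by linarith
      calc |F z - F y| = |S| * (z - y) := by
            rw [hS, abs_div, abs_of_pos hzy, div_mul_cancel₀ _ (ne_of_gt hzy)]
        _ ≤ K * (z - y) := mul_le_mul_of_nonneg_right hslope hzy.le
    intro y hy z hz
    rcases lt_trichotomy y z with h | rfl | h
    · rw [abs_sub_comm (F y) (F z), abs_sub_comm y z,
        abs_of_pos (by linarith : (0:ℝ) < z - y)]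
      exact key y hy z hz h
    · simp
    · rw [abs_of_pos (by linarith : (0:ℝ) < y - z)]
      exact key z hz y hy h
  · exact ⟨0, le_rfl, fun y hy z hz => absurd (hy.1.trans hy.2) (not_le.2 hab)⟩

lemma continuous_of_convexOn (hc : ConvexOn ℝ univ F) : Continuous F := by
  rw [continuous_iff_continuousAt]
  intro x
  obtain ⟨K, hK0, hK⟩ := convexOn_lipschitz hc (x - 1) (x + 1)
  rw [Metric.continuousAt_iff]
  intro ε hε
  refine ⟨min 1 (ε / (K + 1)), by positivity, fun {y} hy => ?_⟩
  have h1 : |y - x| < 1 := lt_of_lt_of_le (by simpa [Real.dist_eq] using hy) (min_le_left _ _)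
  have h2 : |y - x| < ε / (K + 1) :=
    lt_of_lt_of_le (by simpa [Real.dist_eq] using hy) (min_le_right _ _)
  have hy1 : y ∈ Icc (x-1) (x+1) := by
    rw [abs_lt] at h1; constructor <;> linarith [h1.1, h1.2]
  have hx1 : x ∈ Icc (x-1) (x+1) := by constructor <;> linarith
  rw [Real.dist_eq]
  calc |F y - F x| ≤ K * |y - x| := hK y hy1 x hx1
    _ ≤ (K + 1) * |y - x| := by nlinarith [abs_nonneg (y - x)]
    _ < (K + 1) * (ε / (K+1)) := by
        apply mul_lt_mul_of_pos_left h2 (by linarith)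
    _ = ε := by field_simp
end LipAux

lemma reverseFY (hconv : ConvexOn ℝ (Ici 0) f)
    (hsl : Tendsto (fun s => f s / s) atTop atTop) {s : ℝ} (hs : 0 ≤ s) (y : ℝ) :
    s * y - legendre f y ≤ f s := by
  have := fenchelYoung hconv hsl hs y; linarith

lemma biconj (hconv : ConvexOn ℝ (Ici 0) f)
    (hlsc : LowerSemicontinuousOn f (Ici (0:ℝ)))
    {s c : ℝ} (hs : 0 ≤ s) (hc : c < f s) :
    ∃ y : ℝ, c < s * y - legendre f y := by
  rcases eq_or_lt_of_le hs with rfl | hs'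
  · -- s = 0
    set c' := (c + f 0)/2 with hc'
    have hcc' : c < c' := by rw [hc']; linarith
    have hc'f : c' < f 0 := by rw [hc']; linarith
    obtain ⟨m, hm⟩ := exists_subgradient hconv one_pos
    set c₁ := m with hc₁
    set c₀ := f 1 - m with hc₀
    have hlin : ∀ t, 0 ≤ t → c₁ * t + c₀ ≤ f t := by
      intro t ht
      have := hm t ht
      simp only [hc₁, hc₀]; linarith
    -- lsc at 0
    have h0 : ∀ᶠ t in 𝓝[Ici (0:ℝ)] 0, c' < f t := hlsc 0 (Set.mem_Ici.2 le_rfl) c' hc'f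
    rw [eventually_iff, Metric.mem_nhdsWithin_iff] at h0
    obtain ⟨δ, hδ, hsub⟩ := h0
    have hδf : ∀ t, 0 ≤ t → |t| < δ → c' < f t := by
      intro t ht htd
      exact hsub ⟨by simpa [Real.dist_eq, abs_sub_comm] using htd, ht⟩
    set M := max 0 ((c' - c₀)/δ) with hM
    set y := min (c₁ - M) 0 with hy
    have hyneg : y ≤ 0 := min_le_right _ _
    have hMy : (c' - c₀)/δ ≤ c₁ - y ∧ 0 ≤ c₁ - y := by
      constructor
      · have : y ≤ c₁ - M := min_le_left _ _
        have : M ≤ c₁ - y := by linarith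
        exact le_trans (le_max_right _ _) this
      · have : y ≤ c₁ - M := min_le_left _ _
        have : M ≤ c₁ - y := by linarith
        exact le_trans (le_max_left _ _) this
    have hleg : legendre f y ≤ -c' := by
      apply legendre_le
      intro t ht
      rcases lt_or_ge t δ with htδ | htδ
      · have hft : c' < f t := hδf t ht (by rwa [abs_of_nonneg ht])
        nlinarith
      · have hft := hlin t ht
        have e1 : ((c' - c₀)/δ)*δ = c' - c₀ := div_mul_cancel₀ _ (ne_of_gt hδ)
        have e2 : ((c' - c₀)/δ)*δ ≤ (c₁ - y)*δ := mul_le_mul_of_nonneg_right hMy.1 hδ.le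
        have e3 : (c₁ - y)*δ ≤ (c₁ - y)*t := mul_le_mul_of_nonneg_left htδ hMy.2
        nlinarith [e1, e2, e3, hft]
    refine ⟨y, ?_⟩
    have : (0:ℝ) * y - legendre f y = - legendre f y := by ring
    rw [this]
    linarith
  · -- s > 0
    obtain ⟨m, hm⟩ := exists_subgradient hconv hs'
    have hleg : legendre f m ≤ s * m - f s := by
      apply legendre_le
      intro t ht
      have := hm t ht
      nlinarith
    refine ⟨m, by linarith⟩
end ConvexAux

section PsiAux
variable {α : Type*} [MeasurableSpace α]

/-- Recursive selection of the best `y i`, `i ≤ n`, maximizing `g x * y - f*(y)`. -/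
def psiAux (f : ℝ → ℝ) (g : α → ℝ) (y : ℕ → ℝ) : ℕ → α → ℝ
  | 0 => fun _ => y 0
  | n+1 => fun x =>
      if g x * psiAux f g y n x - legendre f (psiAux f g y n x) <
         g x * y (n+1) - legendre f (y (n+1)) then y (n+1) else psiAux f g y n x

variable {f : ℝ → ℝ} {g : α → ℝ} {y : ℕ → ℝ}

lemma psiAux_mem (n : ℕ) (x : α) : ∃ i ≤ n, psiAux f g y n x = y i := by
  induction n with
  | zero => exact ⟨0, le_rfl, rfl⟩
  | succ n ih =>
    obtain ⟨i, hi, hieq⟩ := ih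
    by_cases h : g x * psiAux f g y n x - legendre f (psiAux f g y n x) <
        g x * y (n+1) - legendre f (y (n+1))
    · exact ⟨n+1, le_rfl, by simp [psiAux, h]⟩
    · exact ⟨i, hi.trans (Nat.le_succ n), by simp only [psiAux, if_neg h]; exact hieq⟩

lemma psiAux_measurable (hg : Measurable g) (hleg : Continuous (legendre f)) (n : ℕ) :
    Measurable (psiAux f g y n) := by
  induction n with
  | zero => exact measurable_const
  | succ n ih =>
    have h1 : Measurable fun x => g x * psiAux f g y n x - legendre f (psiAux f g y n x) :=
      (hg.mul ih).sub (hleg.measurable.comp ih)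
    exact Measurable.ite (measurableSet_lt h1 ((hg.mul_const _).sub_const _))
      measurable_const ih

/-- `G n x = g x * ψ_n x - f*(ψ_n x)`. -/
def GAux (f : ℝ → ℝ) (g : α → ℝ) (y : ℕ → ℝ) (n : ℕ) (x : α) : ℝ :=
  g x * psiAux f g y n x - legendre f (psiAux f g y n x)

lemma GAux_succ (n : ℕ) (x : α) :
    GAux f g y (n+1) x = max (GAux f g y n x) (g x * y (n+1) - legendre f (y (n+1))) := by
  by_cases h : g x * psiAux f g y n x - legendre f (psiAux f g y n x) <
      g x * y (n+1) - legendre f (y (n+1))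
  · have hstep : psiAux f g y (n+1) x = y (n+1) := by
      simp only [psiAux, if_pos h]
    unfold GAux
    rw [hstep, max_eq_right h.le]
  · have hstep : psiAux f g y (n+1) x = psiAux f g y n x := by
      simp only [psiAux, if_neg h]
    unfold GAux
    rw [hstep, max_eq_left (not_lt.1 h)]

lemma GAux_mono (x : α) : Monotone fun n => GAux f g y n x := by
  apply monotone_nat_of_le_succ
  intro n
  rw [GAux_succ]
  exact le_max_left _ _

lemma GAux_ge (n i : ℕ) (hi : i ≤ n) (x : α) :
    g x * y i - legendre f (y i) ≤ GAux f g y n x := by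
  induction n with
  | zero =>
    interval_cases i
    simp [GAux, psiAux]
  | succ n ih =>
    rcases Nat.lt_or_ge i (n+1) with h | h
    · exact le_trans (ih (Nat.lt_succ_iff.1 h)) (GAux_mono x (Nat.le_succ n))
    · have : i = n + 1 := le_antisymm hi h
      subst this
      rw [GAux_succ]
      exact le_max_right _ _

lemma GAux_measurable (hg : Measurable g) (hleg : Continuous (legendre f)) (n : ℕ) :
    Measurable (GAux f g y n) :=
  (hg.mul (psiAux_measurable hg hleg n)).sub
    (hleg.measurable.comp (psiAux_measurable hg hleg n))
end PsiAux

section MeasureAux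
variable {f : ℝ → ℝ}

lemma integrable_of_bound {X : Type*} [MeasurableSpace X] (μ : Measure X) [IsFiniteMeasure μ]
    (h : X → ℝ) (hm : AEStronglyMeasurable h μ) (C : ℝ) (hb : ∀ x, |h x| ≤ C) :
    Integrable h μ :=
  (integrable_const C).mono' hm (ae_of_all _ (by simpa using hb))

lemma integrable_legendre_comp {X : Type*} [MeasurableSpace X] (μ : Measure X)
    [IsFiniteMeasure μ]
    (hconv : ConvexOn ℝ (Ici 0) f) (hsl : Tendsto (fun s => f s / s) atTop atTop)
    (ψ : X → ℝ) (hm : AEStronglyMeasurable ψ μ) {a b : ℝ} (hab : ∀ x, ψ x ∈ Icc a b) :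
    Integrable (fun x => legendre f (ψ x)) μ := by
  have hlegc : Continuous (legendre f) := continuous_of_convexOn (legendre_convex hconv hsl)
  apply integrable_of_bound μ _ (hlegc.comp_aestronglyMeasurable hm)
    (max |legendre f a| |legendre f b|)
  intro x
  show |legendre f (ψ x)| ≤ _
  exact abs_le_max_abs_abs (legendre_mono hconv hsl (hab x).1) (legendre_mono hconv hsl (hab x).2)

/-- The value at `ν = 0` bounds `dualObj` from below. -/
lemma dualObj_ge_zero_nu {d : ℕ} (P Q : Measure (Euc d)) [IsProbabilityMeasure P]
    [IsProbabilityMeasure Q]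
    (hconv : ConvexOn ℝ (Ici 0) f) (hsl : Tendsto (fun s => f s / s) atTop atTop)
    (hf1 : f 1 = 0)
    (φ : Euc d → ℝ) (hφc : Continuous φ) {C : ℝ} (hφb : ∀ x, |φ x| ≤ C) :
    (∫ x, φ x ∂P) - ∫ x, legendre f (φ x) ∂Q ≤ dualObj f φ P Q := by
  have hint : ∀ ν : ℝ, Integrable (fun x => legendre f (φ x - ν)) Q := by
    intro ν
    apply integrable_legendre_comp Q hconv hsl _
      ((hφc.sub continuous_const).aestronglyMeasurable) (a := -C - |ν|) (b := C + |ν|)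
    intro x
    have h1 := (abs_le.1 (hφb x)).1
    have h2 := (abs_le.1 (hφb x)).2
    have h3 := neg_abs_le ν
    have h4 := le_abs_self ν
    show φ x - ν ∈ Icc (-C - |ν|) (C + |ν|)
    constructor <;> linarith
  have hφQ : Integrable φ Q := integrable_of_bound Q φ hφc.aestronglyMeasurable C hφb
  have hbdd : BddBelow (Set.range fun ν : ℝ => ν + ∫ x, legendre f (φ x - ν) ∂Q) := by
    refine ⟨∫ x, φ x ∂Q, ?_⟩
    rintro _ ⟨ν, rfl⟩
    show (∫ x, φ x ∂Q) ≤ ν + ∫ x, legendre f (φ x - ν) ∂Q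
    have hmono : ∀ x, φ x - ν ≤ legendre f (φ x - ν) := by
      intro x
      have := fenchelYoung hconv hsl (zero_le_one) (φ x - ν)
      rw [hf1] at this
      linarith
    have hφint : Integrable (fun x => φ x - ν) Q := hφQ.sub (integrable_const ν)
    have := integral_mono hφint (hint ν) hmono
    rw [integral_sub hφQ (integrable_const ν), integral_const] at this
    simp only [probReal_univ, smul_eq_mul, one_mul] at this
    linarith
  have hle : sInf (Set.range fun ν : ℝ => ν + ∫ x, legendre f (φ x - ν) ∂Q)
      ≤ 0 + ∫ x, legendre f (φ x - 0) ∂Q := csInf_le hbdd ⟨0, rfl⟩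
  simp only [sub_zero, zero_add] at hle
  unfold dualObj
  linarith

/-- Continuous approximation of a bounded measurable test function. -/
lemma approx_continuous {d : ℕ} (P Q : Measure (Euc d)) [IsProbabilityMeasure P]
    [IsProbabilityMeasure Q]
    (hconv : ConvexOn ℝ (Ici 0) f) (hsl : Tendsto (fun s => f s / s) atTop atTop)
    (hf1 : f 1 = 0)
    (ψ : Euc d → ℝ) (hψm : Measurable ψ) {B : ℝ} (hB : 0 ≤ B) (hψb : ∀ x, |ψ x| ≤ B)
    {ε : ℝ} (hε : 0 < ε) :
    ∃ φ : Euc d → ℝ, Continuous φ ∧ (∃ C : ℝ, ∀ x, |φ x| ≤ C) ∧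
      (∫ x, ψ x ∂P) - (∫ x, legendre f (ψ x) ∂Q) - ε ≤ dualObj f φ P Q := by
  obtain ⟨K, hK0, hK⟩ := convexOn_lipschitz (legendre_convex hconv hsl) (-B) B
  set ε' := ε / (K + 1) with hε'
  have hε'pos : 0 < ε' := by positivity
  set μ := P + Q with hμ
  have hψμ : Integrable ψ μ := integrable_of_bound μ ψ hψm.aestronglyMeasurable B hψb
  obtain ⟨φ₀, hφ₀sub, hφ₀int⟩ := hψμ.exists_boundedContinuous_integral_sub_le hε'pos
  set φ : Euc d → ℝ := fun x => max (-B) (min B (φ₀ x)) with hφ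
  have hφc : Continuous φ := continuous_const.max (continuous_const.min φ₀.continuous)
  have hφx : ∀ x, φ x = max (-B) (min B (φ₀ x)) := fun x => rfl
  have hφb : ∀ x, |φ x| ≤ B := by
    intro x
    rw [abs_le, hφx x]
    refine ⟨le_max_left _ _, max_le (by linarith) (min_le_left _ _)⟩
  have hclamp : ∀ x, |ψ x - φ x| ≤ |ψ x - φ₀ x| := by
    intro x
    have h1 := (abs_le.1 (hψb x)).1
    have h2 := (abs_le.1 (hψb x)).2
    rcases lt_or_ge (φ₀ x) (-B) with h | h
    · have he : φ x = -B := by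
        rw [hφx x, min_eq_right (by linarith), max_eq_left (by linarith)]
      rw [he, abs_le]
      constructor
      · linarith [neg_abs_le (ψ x - φ₀ x), abs_nonneg (ψ x - φ₀ x)]
      · linarith [le_abs_self (ψ x - φ₀ x)]
    · rcases le_or_gt (φ₀ x) B with h' | h'
      · have he : φ x = φ₀ x := by rw [hφx x, min_eq_right h', max_eq_right h]
        rw [he]
      · have he : φ x = B := by rw [hφx x, min_eq_left h'.le, max_eq_right (by linarith)]
        rw [he, abs_le]
        constructor
        · linarith [neg_abs_le (ψ x - φ₀ x)]
        · linarith [le_abs_self (ψ x - φ₀ x), abs_nonneg (ψ x - φ₀ x)]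
  -- integrability
  have hψP : Integrable ψ P := integrable_of_bound P ψ hψm.aestronglyMeasurable B hψb
  have hφP : Integrable φ P := integrable_of_bound P φ hφc.aestronglyMeasurable B hφb
  have hdiffμ : Integrable (fun x => ‖ψ x - φ₀ x‖) μ := (hψμ.sub hφ₀int).norm
  have hdiffP : Integrable (fun x => ‖ψ x - φ₀ x‖) P :=
    hdiffμ.mono_measure (Measure.le_add_right le_rfl)
  have hdiffQ : Integrable (fun x => ‖ψ x - φ₀ x‖) Q :=
    hdiffμ.mono_measure (Measure.le_add_left le_rfl)
  have habsP : Integrable (fun x => |ψ x - φ x|) P := (hψP.sub hφP).abs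
  have ha1 : (∫ x, ψ x ∂P) - (∫ x, φ x ∂P) ≤ ε' := by
    have e1 : (∫ x, ψ x ∂P) - (∫ x, φ x ∂P) = ∫ x, (ψ x - φ x) ∂P := (integral_sub hψP hφP).symm
    rw [e1]
    calc ∫ x, (ψ x - φ x) ∂P ≤ ∫ x, |ψ x - φ x| ∂P :=
          integral_mono (hψP.sub hφP) habsP (fun x => le_abs_self _)
      _ ≤ ∫ x, ‖ψ x - φ₀ x‖ ∂P :=
          integral_mono habsP hdiffP (fun x => by simpa using hclamp x)
      _ ≤ ∫ x, ‖ψ x - φ₀ x‖ ∂μ :=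
          integral_mono_measure (Measure.le_add_right le_rfl)
            (ae_of_all _ fun x => norm_nonneg _) hdiffμ
      _ ≤ ε' := hφ₀sub
  -- Legendre part
  have hlψ : Integrable (fun x => legendre f (ψ x)) Q :=
    integrable_legendre_comp Q hconv hsl ψ hψm.aestronglyMeasurable
      (a := -B) (b := B) (fun x => abs_le.1 (hψb x))
  have hlφ : Integrable (fun x => legendre f (φ x)) Q :=
    integrable_legendre_comp Q hconv hsl φ hφc.aestronglyMeasurable
      (a := -B) (b := B) (fun x => abs_le.1 (hφb x))
  have ha2 : (∫ x, legendre f (φ x) ∂Q) - (∫ x, legendre f (ψ x) ∂Q) ≤ K * ε' := by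
    have hp : ∀ x, legendre f (φ x) - legendre f (ψ x) ≤ K * ‖ψ x - φ₀ x‖ := by
      intro x
      have h1 := hK (φ x) (abs_le.1 (hφb x)) (ψ x) (abs_le.1 (hψb x))
      have h2 := hclamp x
      calc legendre f (φ x) - legendre f (ψ x) ≤ |legendre f (φ x) - legendre f (ψ x)| :=
            le_abs_self _
        _ ≤ K * |φ x - ψ x| := h1
        _ = K * |ψ x - φ x| := by rw [abs_sub_comm]
        _ ≤ K * |ψ x - φ₀ x| := mul_le_mul_of_nonneg_left h2 hK0
        _ = K * ‖ψ x - φ₀ x‖ := rfl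
    have e2 : (∫ x, legendre f (φ x) ∂Q) - (∫ x, legendre f (ψ x) ∂Q)
        = ∫ x, (legendre f (φ x) - legendre f (ψ x)) ∂Q := (integral_sub hlφ hlψ).symm
    rw [e2]
    calc ∫ x, (legendre f (φ x) - legendre f (ψ x)) ∂Q ≤ ∫ x, K * ‖ψ x - φ₀ x‖ ∂Q :=
          integral_mono (hlφ.sub hlψ) (hdiffQ.const_mul K) hp
      _ = K * ∫ x, ‖ψ x - φ₀ x‖ ∂Q := integral_const_mul K _
      _ ≤ K * ∫ x, ‖ψ x - φ₀ x‖ ∂μ := by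
          apply mul_le_mul_of_nonneg_left _ hK0
          exact integral_mono_measure (Measure.le_add_left le_rfl)
            (ae_of_all _ fun x => norm_nonneg _) hdiffμ
      _ ≤ K * ε' := mul_le_mul_of_nonneg_left hφ₀sub hK0
  have hmain := dualObj_ge_zero_nu P Q hconv hsl hf1 φ hφc hφb
  have hKε : ε' + K * ε' = ε := by
    rw [hε']; field_simp; ring
  exact ⟨φ, hφc, ⟨B, hφb⟩, by linarith⟩

/-- Existence of a good bounded measurable test function. -/
lemma exists_good_psi {d : ℕ} (P Q : Measure (Euc d)) [IsProbabilityMeasure P]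
    [IsProbabilityMeasure Q]
    (hconv : ConvexOn ℝ (Ici 0) f) (hlsc : LowerSemicontinuousOn f (Ici (0:ℝ)))
    (hsl : Tendsto (fun s => f s / s) atTop atTop)
    (hac : P ≪ Q) (c : ℝ)
    (hc : ∀ _ : Integrable (fun x => f ((P.rnDeriv Q x).toReal)) Q,
       c < ∫ x, f ((P.rnDeriv Q x).toReal) ∂Q) :
    ∃ (ψ : Euc d → ℝ) (B : ℝ), Measurable ψ ∧ 0 ≤ B ∧ (∀ x, |ψ x| ≤ B) ∧
      c < (∫ x, ψ x ∂P) - ∫ x, legendre f (ψ x) ∂Q := by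
  classical
  haveI := Measure.haveLebesgueDecomposition_of_sigmaFinite P Q
  set g : Euc d → ℝ := fun x => (P.rnDeriv Q x).toReal with hgdef
  have hgmeas : Measurable g := (Measure.measurable_rnDeriv P Q).ennreal_toReal
  have hg0 : ∀ x, 0 ≤ g x := fun x => ENNReal.toReal_nonneg
  have hgint : Integrable g Q := Measure.integrable_toReal_rnDeriv
  have hlegc : Continuous (legendre f) := continuous_of_convexOn (legendre_convex hconv hsl)
  set y : ℕ → ℝ := fun n => ((Denumerable.ofNat ℚ n : ℚ) : ℝ) with hydef
  set ψ : ℕ → Euc d → ℝ := psiAux f g y with hψdef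
  set G : ℕ → Euc d → ℝ := GAux f g y with hGdef
  have hψmeas : ∀ n, Measurable (ψ n) := psiAux_measurable hgmeas hlegc
  have hGmeas : ∀ n, Measurable (G n) := GAux_measurable hgmeas hlegc
  have hGle : ∀ n x, G n x ≤ f (g x) := by
    intro n x
    exact reverseFY hconv hsl (hg0 x) (ψ n x)
  have htend : ∀ x, Tendsto (fun n => G n x) atTop (𝓝 (f (g x))) := by
    intro x
    rw [tendsto_order]
    constructor
    · intro a ha
      obtain ⟨y₀, hy₀⟩ := biconj hconv hlsc (hg0 x) ha
      have hopen : IsOpen {z : ℝ | a < g x * z - legendre f z} :=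
        isOpen_lt continuous_const ((continuous_const.mul continuous_id).sub hlegc)
      obtain ⟨q, hq⟩ := (Rat.denseRange_cast (𝕜 := ℝ)).exists_mem_open hopen ⟨y₀, hy₀⟩
      obtain ⟨i, hi⟩ : ∃ i : ℕ, Denumerable.ofNat ℚ i = q :=
        ⟨_, Denumerable.ofNat_encode (α := ℚ) q⟩
      rw [eventually_atTop]
      refine ⟨i, fun n hn => ?_⟩
      have hyi : y i = (q : ℝ) := by
        show ((Denumerable.ofNat ℚ i : ℚ) : ℝ) = (q : ℝ)
        rw [hi]
      calc a < g x * y i - legendre f (y i) := by rw [hyi]; exact hq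
        _ ≤ G n x := GAux_ge n _ hn x
    · intro a ha
      exact Eventually.of_forall fun n => lt_of_le_of_lt (hGle n x) ha
  -- uniform bounds for each G n
  have hBn : ∀ n : ℕ, ∃ B C : ℝ, 0 ≤ B ∧ 0 ≤ C ∧ (∀ x, |ψ n x| ≤ B) ∧
      (∀ x, |legendre f (ψ n x)| ≤ C) := by
    intro n
    have hne : (Finset.range (n+1)).Nonempty := Finset.nonempty_range_add_one
    refine ⟨(Finset.range (n+1)).sup' hne (fun i => |y i|),
      (Finset.range (n+1)).sup' hne (fun i => |legendre f (y i)|), ?_, ?_, ?_, ?_⟩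
    · exact le_trans (abs_nonneg (y 0)) (Finset.le_sup' (fun i => |y i|) (Finset.mem_range.2 n.succ_pos))
    · exact le_trans (abs_nonneg (legendre f (y 0))) (Finset.le_sup' (fun i => |legendre f (y i)|) (Finset.mem_range.2 n.succ_pos))
    · intro x
      obtain ⟨i, hi, hieq⟩ := psiAux_mem (f := f) (g := g) (y := y) n x
      rw [hψdef, hieq]
      exact Finset.le_sup' (fun i => |y i|) (Finset.mem_range.2 (Nat.lt_succ_of_le hi))
    · intro x
      obtain ⟨i, hi, hieq⟩ := psiAux_mem (f := f) (g := g) (y := y) n x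
      rw [hψdef, hieq]
      exact Finset.le_sup' (fun i => |legendre f (y i)|) (Finset.mem_range.2 (Nat.lt_succ_of_le hi))
  have hGint : ∀ n, Integrable (G n) Q := by
    intro n
    obtain ⟨B, C, hB0, hC0, hψB, hlC⟩ := hBn n
    refine ((hgint.const_mul B).add (integrable_const C)).mono'
      (hGmeas n).aestronglyMeasurable (ae_of_all _ fun x => ?_)
    have h1 : |G n x| ≤ g x * |ψ n x| + |legendre f (ψ n x)| := by
      rw [hGdef]
      unfold GAux
      refine le_trans (abs_sub _ _) ?_
      rw [abs_mul, abs_of_nonneg (hg0 x)]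
    have h2 : g x * |ψ n x| ≤ g x * B := mul_le_mul_of_nonneg_left (hψB x) (hg0 x)
    have : |G n x| ≤ B * g x + C := by
      have := hlC x
      nlinarith
    simpa [Real.norm_eq_abs] using this
  -- key step : some G n has integral above c
  have hkey : ∃ n, c < ∫ x, G n x ∂Q := by
    by_cases hint : Integrable (fun x => f (g x)) Q
    · have hI := hc hint
      have ht := integral_tendsto_of_tendsto_of_monotone hGint hint
        (ae_of_all _ fun x => GAux_mono x) (ae_of_all _ htend)
      exact (ht.eventually (eventually_gt_nhds hI)).exists
    · by_contra hcon
      push_neg at hcon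
      have hfgmeas : Measurable (fun x => f (g x)) :=
        measurable_of_tendsto_metrizable hGmeas (tendsto_pi_nhds.2 htend)
      have hHnn : ∀ n (x : Euc d), 0 ≤ G n x - G 0 x :=
        fun n x => sub_nonneg.2 (GAux_mono x (Nat.zero_le n))
      have hHint : ∀ n, Integrable (fun x => G n x - G 0 x) Q := fun n => (hGint n).sub (hGint 0)
      have hlim : Tendsto (fun n => ∫⁻ x, ENNReal.ofReal (G n x - G 0 x) ∂Q) atTop
          (𝓝 (∫⁻ x, ENNReal.ofReal (f (g x) - G 0 x) ∂Q)) := by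
        apply lintegral_tendsto_of_tendsto_of_monotone
        · exact fun n => (ENNReal.measurable_ofReal.comp
            ((hGmeas n).sub (hGmeas 0))).aemeasurable
        · exact ae_of_all _ fun x n m hnm =>
            ENNReal.ofReal_le_ofReal (sub_le_sub_right (GAux_mono x hnm) _)
        · exact ae_of_all _ fun x =>
            (ENNReal.continuous_ofReal.tendsto _).comp ((htend x).sub tendsto_const_nhds)
      have hbound : ∀ n, ∫⁻ x, ENNReal.ofReal (G n x - G 0 x) ∂Q
          ≤ ENNReal.ofReal (c - ∫ x, G 0 x ∂Q) := by
        intro n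
        rw [← ofReal_integral_eq_lintegral_ofReal (hHint n) (ae_of_all _ (hHnn n))]
        apply ENNReal.ofReal_le_ofReal
        rw [integral_sub (hGint n) (hGint 0)]
        linarith [hcon n]
      have hfin : ∫⁻ x, ENNReal.ofReal (f (g x) - G 0 x) ∂Q
          ≤ ENNReal.ofReal (c - ∫ x, G 0 x ∂Q) :=
        le_of_tendsto' hlim hbound |>.trans_eq rfl
      have hintlim : Integrable (fun x => f (g x) - G 0 x) Q := by
        refine ⟨(hfgmeas.sub (hGmeas 0)).aestronglyMeasurable, ?_⟩
        rw [hasFiniteIntegral_iff_ofReal (ae_of_all _ fun x => sub_nonneg.2 (hGle 0 x))]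
        exact lt_of_le_of_lt hfin ENNReal.ofReal_lt_top
      have : Integrable (fun x => f (g x)) Q :=
        (hintlim.add (hGint 0)).congr (ae_of_all _ fun x => by simp)
      exact hint this
  obtain ⟨n, hn⟩ := hkey
  obtain ⟨B, C, hB0, hC0, hψB, hlC⟩ := hBn n
  refine ⟨ψ n, B, hψmeas n, hB0, hψB, ?_⟩
  -- rewrite ∫ G n as the objective
  have hψP : Integrable (ψ n) P := by
    refine (integrable_const B).mono' (hψmeas n).aestronglyMeasurable
      (ae_of_all _ fun x => by simpa [Real.norm_eq_abs] using hψB x)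
  have hsmul : Integrable (fun x => (P.rnDeriv Q x).toReal • ψ n x) Q :=
    (integrable_rnDeriv_smul_iff hac).2 hψP
  have hlint : Integrable (fun x => legendre f (ψ n x)) Q :=
    integrable_legendre_comp Q hconv hsl (ψ n) (hψmeas n).aestronglyMeasurable
      (a := -B) (b := B) (fun x => abs_le.1 (hψB x))
  have he : ∫ x, G n x ∂Q = (∫ x, ψ n x ∂P) - ∫ x, legendre f (ψ n x) ∂Q := by
    have e0 : ∀ x, G n x = (P.rnDeriv Q x).toReal • ψ n x - legendre f (ψ n x) := by
      intro x
      rw [hGdef]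
      unfold GAux
      rw [smul_eq_mul]
    rw [integral_congr_ae (ae_of_all _ e0), integral_sub hsmul hlint,
      integral_rnDeriv_smul hac]
  rw [he] at hn
  exact hn

/-- Easy direction : each dual objective is at most the `f`-divergence. -/
lemma dualObj_le_Df {d : ℕ} (P Q : Measure (Euc d)) [IsProbabilityMeasure P]
    [IsProbabilityMeasure Q]
    (hconv : ConvexOn ℝ (Ici 0) f) (hsl : Tendsto (fun s => f s / s) atTop atTop)
    (hac : P ≪ Q) (hint : Integrable (fun x => f ((P.rnDeriv Q x).toReal)) Q)
    (φ : Euc d → ℝ) (hφc : Continuous φ) {C : ℝ} (hφb : ∀ x, |φ x| ≤ C) :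
    dualObj f φ P Q ≤ ∫ x, f ((P.rnDeriv Q x).toReal) ∂Q := by
  haveI := Measure.haveLebesgueDecomposition_of_sigmaFinite P Q
  set g : Euc d → ℝ := fun x => (P.rnDeriv Q x).toReal with hgdef
  set I : ℝ := ∫ x, f (g x) ∂Q with hI
  have hg0 : ∀ x, 0 ≤ g x := fun x => ENNReal.toReal_nonneg
  have key : ∀ ν : ℝ, (∫ x, φ x ∂P) - I ≤ ν + ∫ x, legendre f (φ x - ν) ∂Q := by
    intro ν
    have hφνP : Integrable (fun x => φ x - ν) P :=
      (integrable_of_bound P φ hφc.aestronglyMeasurable C hφb).sub (integrable_const ν)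
    have hsmul : Integrable (fun x => g x • (φ x - ν)) Q :=
      (integrable_rnDeriv_smul_iff hac).2 hφνP
    have hRHSint : Integrable (fun x => g x • (φ x - ν) - f (g x)) Q := hsmul.sub hint
    have hlegint : Integrable (fun x => legendre f (φ x - ν)) Q := by
      apply integrable_legendre_comp Q hconv hsl _
        ((hφc.sub continuous_const).aestronglyMeasurable) (a := -C - |ν|) (b := C + |ν|)
      intro x
      have h1 := (abs_le.1 (hφb x)).1
      have h2 := (abs_le.1 (hφb x)).2
      have h3 := neg_abs_le ν
      have h4 := le_abs_self ν
      show φ x - ν ∈ Icc (-C - |ν|) (C + |ν|)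
      constructor <;> linarith
    have hpt : ∀ x, g x • (φ x - ν) - f (g x) ≤ legendre f (φ x - ν) := by
      intro x
      have := fenchelYoung hconv hsl (hg0 x) (φ x - ν)
      simpa [smul_eq_mul] using this
    have hmono := integral_mono hRHSint hlegint hpt
    have he : ∫ x, (g x • (φ x - ν) - f (g x)) ∂Q = (∫ x, φ x ∂P) - ν - I := by
      rw [integral_sub hsmul hint, integral_rnDeriv_smul hac,
        integral_sub (integrable_of_bound P φ hφc.aestronglyMeasurable C hφb)
          (integrable_const ν), integral_const]
      simp [hI]
      rfl
    rw [he] at hmono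
    linarith
  have hge : (∫ x, φ x ∂P) - I
      ≤ sInf (Set.range fun ν : ℝ => ν + ∫ x, legendre f (φ x - ν) ∂Q) :=
    le_csInf (Set.range_nonempty _) (by rintro _ ⟨ν, rfl⟩; exact key ν)
  unfold dualObj
  linarith

/-- If `P` is not absolutely continuous w.r.t. `Q`, the dual objectives are unbounded. -/
lemma not_ac_unbounded {d : ℕ} (P Q : Measure (Euc d)) [IsProbabilityMeasure P]
    [IsProbabilityMeasure Q]
    (hconv : ConvexOn ℝ (Ici 0) f) (hsl : Tendsto (fun s => f s / s) atTop atTop)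
    (hf1 : f 1 = 0) (hnac : ¬ P ≪ Q) (c : ℝ) :
    ∃ φ : Euc d → ℝ, Continuous φ ∧ (∃ C : ℝ, ∀ x, |φ x| ≤ C) ∧ c < dualObj f φ P Q := by
  obtain ⟨s, hQs, hPs⟩ : ∃ s : Set (Euc d), Q s = 0 ∧ P s ≠ 0 := by
    by_contra hcon
    push_neg at hcon
    exact hnac (Measure.AbsolutelyContinuous.mk fun s _ h0 => hcon s h0)
  set A := toMeasurable Q s with hA
  have hQA : Q A = 0 := by rw [hA, measure_toMeasurable]; exact hQs
  have hPA : 0 < P A := by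
    have hsub : P s ≤ P A := measure_mono (subset_toMeasurable Q s)
    have hne : P A ≠ 0 := fun h => hPs (le_antisymm (h ▸ hsub) zero_le)
    exact pos_iff_ne_zero.2 hne
  obtain ⟨K, hKA, hKcomp, hPK⟩ := (measurableSet_toMeasurable Q s).exists_lt_isCompact hPA
  set κ := (P K).toReal with hκ
  have hPKfin : P K ≠ ⊤ := (measure_lt_top P K).ne
  have hκpos : 0 < κ := ENNReal.toReal_pos (ne_of_gt hPK) hPKfin
  have hleg0 : 0 ≤ legendre f 0 := by
    have := fenchelYoung hconv hsl zero_le_one 0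
    rw [hf1] at this
    simpa using this
  -- choose n
  obtain ⟨n, hn⟩ := exists_nat_gt ((c + 1 + legendre f 0) / κ)
  have hnκ : c + 1 + legendre f 0 < n * κ := by
    rw [div_lt_iff₀ hκpos] at hn
    linarith
  set Lf := legendre f (n : ℝ) with hLf
  have hLf0 : 0 ≤ Lf := le_trans hleg0 (legendre_mono hconv hsl (by positivity))
  -- small open superset of K
  have hQK : Q K = 0 := le_antisymm (hQA ▸ measure_mono hKA) zero_le
  have hrpos : (0:ℝ≥0∞) < ENNReal.ofReal (1/(Lf+1)) := by
    apply ENNReal.ofReal_pos.2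
    positivity
  obtain ⟨U, hKU, hUopen, hQU⟩ := K.exists_isOpen_lt_of_lt _ (hQK ▸ hrpos)
  obtain ⟨u, hu1, hu0, hucomp, hurange⟩ :=
    exists_continuous_one_zero_of_isCompact hKcomp hUopen.isClosed_compl
      (disjoint_compl_right_iff_subset.mpr hKU)
  set φ : Euc d → ℝ := fun x => (n:ℝ) * u x with hφ
  have hφc : Continuous φ := continuous_const.mul u.continuous
  have hφb : ∀ x, |φ x| ≤ (n:ℝ) := by
    intro x
    rw [hφ, abs_mul, Nat.abs_cast]
    have h1 := (hurange x).1
    have h2 := (hurange x).2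
    calc (n:ℝ) * |u x| ≤ (n:ℝ) * 1 := by
          apply mul_le_mul_of_nonneg_left _ (Nat.cast_nonneg n)
          rw [abs_le]; constructor <;> linarith
      _ = n := mul_one _
  have hφ0 : ∀ x, 0 ≤ φ x := fun x => mul_nonneg (Nat.cast_nonneg n) (hurange x).1
  have hφle : ∀ x, φ x ≤ (n:ℝ) := fun x => by
    have := (hurange x).2
    calc φ x = (n:ℝ) * u x := rfl
      _ ≤ (n:ℝ) * 1 := mul_le_mul_of_nonneg_left this (Nat.cast_nonneg n)
      _ = n := mul_one _
  have hKm : MeasurableSet K := hKcomp.measurableSet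
  have hUm : MeasurableSet U := hUopen.measurableSet
  -- lower bound for ∫ φ dP
  have hφP : Integrable φ P := integrable_of_bound P φ hφc.aestronglyMeasurable _ hφb
  have hindP : Integrable (K.indicator fun _ => (n:ℝ)) P :=
    (integrable_const _).indicator hKm
  have hlb : (n:ℝ) * κ ≤ ∫ x, φ x ∂P := by
    have hpt : ∀ x, (K.indicator fun _ => (n:ℝ)) x ≤ φ x := by
      intro x
      by_cases hx : x ∈ K
      · rw [indicator_of_mem hx]
        have h1 : u x = 1 := hu1 hx
        show (n:ℝ) ≤ (n:ℝ) * u x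
        rw [h1, mul_one]
      · rw [indicator_of_notMem hx]
        exact hφ0 x
    have h2 := integral_mono hindP hφP hpt
    rw [integral_indicator_const _ hKm, smul_eq_mul] at h2
    rw [mul_comm]
    exact h2
  -- upper bound for ∫ f*(φ) dQ
  have hlφ : Integrable (fun x => legendre f (φ x)) Q :=
    integrable_legendre_comp Q hconv hsl φ hφc.aestronglyMeasurable
      (a := 0) (b := (n:ℝ)) (fun x => ⟨hφ0 x, hφle x⟩)
  have hindQ : Integrable (fun x => (U.indicator fun _ => Lf) x + legendre f 0) Q :=
    ((integrable_const Lf).indicator hUm).add (integrable_const _)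
  have hub : (∫ x, legendre f (φ x) ∂Q) ≤ 1 + legendre f 0 := by
    have hpt : ∀ x, legendre f (φ x) ≤ (U.indicator fun _ => Lf) x + legendre f 0 := by
      intro x
      by_cases hx : x ∈ U
      · rw [indicator_of_mem hx]
        have := legendre_mono hconv hsl (hφle x)
        rw [← hLf] at this
        linarith
      · rw [indicator_of_notMem hx]
        have hu0x : u x = 0 := hu0 hx
        have hφx0 : φ x = 0 := by
          show (n:ℝ) * u x = 0
          rw [hu0x, mul_zero]
        rw [hφx0]
        linarith
    have h1 := integral_mono hlφ hindQ hpt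
    rw [integral_add ((integrable_const Lf).indicator hUm) (integrable_const _),
      integral_indicator_const _ hUm, integral_const] at h1
    have hQUle : (Q U).toReal ≤ 1/(Lf+1) := by
      have hr : (Q U) ≤ ENNReal.ofReal (1/(Lf+1)) := hQU.le
      calc (Q U).toReal ≤ (ENNReal.ofReal (1/(Lf+1))).toReal :=
            ENNReal.toReal_mono ENNReal.ofReal_ne_top hr
        _ = 1/(Lf+1) := ENNReal.toReal_ofReal (by positivity)
    have h2 : Lf * (Q U).toReal ≤ 1 := by
      calc Lf * (Q U).toReal ≤ Lf * (1/(Lf+1)) := mul_le_mul_of_nonneg_left hQUle hLf0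
        _ ≤ 1 := by
            rw [mul_one_div, div_le_one (by positivity)]
            linarith
    simp only [probReal_univ, measureReal_def, measure_univ, ENNReal.toReal_one, smul_eq_mul, one_mul, mul_one] at h1
    linarith
  have hmain := dualObj_ge_zero_nu P Q hconv hsl hf1 φ hφc hφb
  exact ⟨φ, hφc, ⟨n, hφb⟩, by linarith⟩
end MeasureAux

theorem fdivergence_variational_representation
    {d : ℕ} (hd : 1 ≤ d)
    (f : ℝ → ℝ) (hconv : StrictConvexOn ℝ (Ici (0:ℝ)) f)
    (hlsc : LowerSemicontinuousOn f (Ici (0:ℝ)))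
    (hsl : Tendsto (fun s => f s / s) atTop atTop)
    (hf1 : f 1 = 0)
    (P Q : Measure (Euc d)) (hPprob : IsProbabilityMeasure P)
    (hQprob : IsProbabilityMeasure Q) :
    DfE f P Q = sSup {r : EReal | ∃ φ : Euc d → ℝ, Continuous φ ∧
      (∃ C : ℝ, ∀ x : Euc d, |φ x| ≤ C) ∧ r = ((dualObj f φ P Q : ℝ) : EReal)} := by
  classical
  haveI := hPprob
  haveI := hQprob
  have hconv' : ConvexOn ℝ (Ici 0) f := hconv.convexOn
  set S := {r : EReal | ∃ φ : Euc d → ℝ, Continuous φ ∧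
      (∃ C : ℝ, ∀ x : Euc d, |φ x| ≤ C) ∧ r = ((dualObj f φ P Q : ℝ) : EReal)} with hSdef
  have hS0 : ((dualObj f (fun _ => (0:ℝ)) P Q : ℝ) : EReal) ∈ S :=
    ⟨fun _ => 0, continuous_const, ⟨0, fun x => by simp⟩, rfl⟩
  by_cases h : P ≪ Q ∧ Integrable (fun x => f ((P.rnDeriv Q x).toReal)) Q
  · obtain ⟨hac, hint⟩ := h
    unfold DfE
    rw [if_pos ⟨hac, hint⟩]
    set I : ℝ := ∫ x, f ((P.rnDeriv Q x).toReal) ∂Q with hI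
    apply le_antisymm
    · -- lower bound direction: I ≤ sSup S
      by_contra hlt
      push_neg at hlt
      have hbot : (⊥:EReal) < sSup S := lt_of_lt_of_le (EReal.bot_lt_coe _) (le_sSup hS0)
      have htop : sSup S ≠ ⊤ := (lt_of_lt_of_le hlt le_top).ne
      have hbeq : (((sSup S).toReal : ℝ) : EReal) = sSup S := EReal.coe_toReal htop hbot.ne'
      set b := (sSup S).toReal with hb
      have hbI : b < I := by
        rw [← EReal.coe_lt_coe_iff, hbeq]
        exact hlt
      obtain ⟨ψ, B, hψm, hB0, hψb, hV⟩ :=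
        exists_good_psi P Q hconv' hlsc hsl hac b (fun _ => hbI)
      have hε : 0 < ((∫ x, ψ x ∂P) - (∫ x, legendre f (ψ x) ∂Q) - b)/2 := by linarith
      obtain ⟨φ, hφc, hφb, hφge⟩ := approx_continuous P Q hconv' hsl hf1 ψ hψm hB0 hψb hε
      have hmem : ((dualObj f φ P Q : ℝ):EReal) ∈ S := ⟨φ, hφc, hφb, rfl⟩
      have hle : ((dualObj f φ P Q : ℝ):EReal) ≤ ((b:ℝ):EReal) := by
        rw [hbeq]
        exact le_sSup hmem
      have := EReal.coe_le_coe_iff.1 hle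
      linarith
    · -- upper bound: sSup S ≤ I
      apply sSup_le
      rintro r ⟨φ, hφc, ⟨C, hφb⟩, rfl⟩
      exact EReal.coe_le_coe_iff.2 (dualObj_le_Df P Q hconv' hsl hac hint φ hφc hφb)
  · unfold DfE
    rw [if_neg h]
    refine ((sSup_eq_top.2 ?_)).symm
    intro b hb
    induction b using EReal.rec with
    | bot => exact ⟨_, hS0, EReal.bot_lt_coe _⟩
    | coe c =>
      by_cases hac : P ≪ Q
      · have hnint : ¬ Integrable (fun x => f ((P.rnDeriv Q x).toReal)) Q :=
          fun hi => h ⟨hac, hi⟩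
        obtain ⟨ψ, B, hψm, hB0, hψb, hV⟩ :=
          exists_good_psi P Q hconv' hlsc hsl hac c (fun hi => absurd hi hnint)
        have hε : 0 < ((∫ x, ψ x ∂P) - (∫ x, legendre f (ψ x) ∂Q) - c)/2 := by linarith
        obtain ⟨φ, hφc, hφb, hφge⟩ := approx_continuous P Q hconv' hsl hf1 ψ hψm hB0 hψb hε
        refine ⟨_, ⟨φ, hφc, hφb, rfl⟩, ?_⟩
        exact EReal.coe_lt_coe_iff.2 (by linarith)
      · obtain ⟨φ, hφc, hφb, hφgt⟩ := not_ac_unbounded P Q hconv' hsl hf1 hac c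
        exact ⟨_, ⟨φ, hφc, hφb, rfl⟩, EReal.coe_lt_coe_iff.2 hφgt⟩
    | top => exact absurd hb (lt_irrefl ⊤)

end
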